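/- For every integer r ≥ 1, with H̃^{r/2} := Σ_{i=2}^{N} |μ_i|^{r/2} h_i h_iᵀ, the GCN iterates satisfy ‖H̃^{r/2} F^(K)‖_F ≤ μ_high^{K + r/2} · ‖F^(0)‖_F. -/
import Mathlib


open Matrix

noncomputable section

/-- Euclidean (2-)norm on `ℝ^N`. -/
def rnorm2 {N : ℕ} (f : Fin N → ℝ) : ℝ := Real.sqrt (∑ i, f i ^ 2)

/-- Frobenius norm of a real matrix. -/
def frob {N m : ℕ} (M : Matrix (Fin N) (Fin m) ℝ) : ℝ := Real.sqrt (∑ i, ∑ j, M i j ^ 2)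

/-- Entrywise ReLU of a vector. -/
def reluV {N : ℕ} (f : Fin N → ℝ) : Fin N → ℝ := fun i => max (f i) 0

/-- Entrywise ReLU of a matrix. -/
def reluM {N m : ℕ} (M : Matrix (Fin N) (Fin m) ℝ) : Matrix (Fin N) (Fin m) ℝ :=
  Matrix.of fun i j => max (M i j) 0

/-- `P f = f - ⟨f, h⟩ h`. -/
def Pv {N : ℕ} (h : Fin N → ℝ) (f : Fin N → ℝ) : Fin N → ℝ := f - (f ⬝ᵥ h) • h

/-- `P` applied columnwise to a matrix. -/
def Pcol {N m : ℕ} (h : Fin N → ℝ) (M : Matrix (Fin N) (Fin m) ℝ) :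
    Matrix (Fin N) (Fin m) ℝ :=
  Matrix.of fun i j => M i j - ((fun x => M x j) ⬝ᵥ h) * h i

/-- `μ_high = max{|μ_2|, …, |μ_N|}` (indices `i : Fin N` with `i ≥ 1`). -/
def muHigh {N : ℕ} (μ : Fin N → ℝ) : ℝ := ⨆ i : {i : Fin N // 0 < (i : ℕ)}, |μ i.1|

/-- The high pass `H̃^{r/2} = Σ_{i=2}^{N} |μ_i|^{r/2} h_i h_iᵀ`. -/
def HtildePow {N : ℕ} (h : Fin N → Fin N → ℝ) (μ : Fin N → ℝ) (r : ℕ) :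
    Matrix (Fin N) (Fin N) ℝ :=
  ∑ i ∈ Finset.univ.filter (fun i : Fin N => 0 < (i : ℕ)),
    (|μ i| ^ ((r : ℝ) / 2)) • Matrix.vecMulVec (h i) (h i)

namespace S15
variable {N : ℕ}

lemma frob_nonneg {m : ℕ} (M : Matrix (Fin N) (Fin m) ℝ) : 0 ≤ frob M := Real.sqrt_nonneg _

lemma sqrt_le_mul_sqrt {c A B : ℝ} (hc : 0 ≤ c) (h : A ≤ c ^ 2 * B) :
    Real.sqrt A ≤ c * Real.sqrt B := by
  calc Real.sqrt A ≤ Real.sqrt (c ^ 2 * B) := Real.sqrt_le_sqrt h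
    _ = c * Real.sqrt B := by rw [Real.sqrt_mul (sq_nonneg c), Real.sqrt_sq hc]

/-- columns of Q are orthonormal too -/
lemma col_ortho (h : Fin N → Fin N → ℝ)
    (hortho : ∀ i j, h i ⬝ᵥ h j = if i = j then 1 else 0) (x x' : Fin N) :
    ∑ i, h i x * h i x' = if x = x' then 1 else 0 := by
  set Q : Matrix (Fin N) (Fin N) ℝ := Matrix.of h with hQ
  have h1 : Q * Qᵀ = 1 := by
    ext i j
    simpa [hQ, Matrix.mul_apply, Matrix.one_apply, dotProduct] using hortho i j
  have h2 : Qᵀ * Q = 1 := mul_eq_one_comm.mp h1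
  have := congrFun (congrFun h2 x) x'
  simpa [hQ, Matrix.mul_apply, Matrix.one_apply] using this

lemma expand (h : Fin N → Fin N → ℝ)
    (hortho : ∀ i j, h i ⬝ᵥ h j = if i = j then 1 else 0)
    (s : Finset (Fin N)) (c : Fin N → ℝ) :
    ∑ x, (∑ i ∈ s, c i * h i x) ^ 2 = ∑ i ∈ s, c i ^ 2 := by
  have e1 : ∀ x : Fin N, (∑ i ∈ s, c i * h i x) ^ 2
      = ∑ i ∈ s, ∑ j ∈ s, (c i * c j) * (h i x * h j x) := by
    intro x
    rw [sq, Finset.sum_mul_sum]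
    apply Finset.sum_congr rfl; intro i _
    apply Finset.sum_congr rfl; intro j _
    ring
  simp_rw [e1]
  rw [Finset.sum_comm]
  have e2 : ∀ i ∈ s, ∑ x, ∑ j ∈ s, (c i * c j) * (h i x * h j x) = c i ^ 2 := by
    intro i hi
    rw [Finset.sum_comm]
    have e3 : ∀ j ∈ s, ∑ x, (c i * c j) * (h i x * h j x)
        = (c i * c j) * (if i = j then 1 else 0) := by
      intro j _
      rw [← Finset.mul_sum]
      congr 1
      simpa [dotProduct] using hortho i j
    rw [Finset.sum_congr rfl e3]
    simp only [mul_ite, mul_one, mul_zero]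
    rw [Finset.sum_ite_eq s i (fun j => c i * c j)]
    simp [hi, sq]
  exact Finset.sum_congr rfl e2

end S15

namespace S15
variable {N : ℕ}
variable (h : Fin N → Fin N → ℝ)

lemma complete (hortho : ∀ i j, h i ⬝ᵥ h j = if i = j then 1 else 0)
    (y : Fin N → ℝ) (x : Fin N) : ∑ i, (h i ⬝ᵥ y) * h i x = y x := by
  have e1 : ∀ i : Fin N, (h i ⬝ᵥ y) * h i x = ∑ x' : Fin N, y x' * (h i x * h i x') := by
    intro i
    simp only [dotProduct, Finset.sum_mul]
    apply Finset.sum_congr rfl; intro x' _; ring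
  simp_rw [e1]
  rw [Finset.sum_comm]
  have e2 : ∀ x' : Fin N, ∑ i, y x' * (h i x * h i x')
      = y x' * (if x = x' then 1 else 0) := by
    intro x'
    rw [← Finset.mul_sum, col_ortho h hortho x x']
  simp_rw [e2]
  simp

lemma parseval (hortho : ∀ i j, h i ⬝ᵥ h j = if i = j then 1 else 0)
    (y : Fin N → ℝ) : ∑ i, (h i ⬝ᵥ y) ^ 2 = ∑ x, y x ^ 2 := by
  have := expand h hortho Finset.univ (fun i => h i ⬝ᵥ y)
  rw [← this]
  apply Finset.sum_congr rfl; intro x _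
  congr 1
  exact complete h hortho y x

/-- the matrix `G = ∑_{i∈s} d i • h_i h_iᵀ` applied to `M` -/
lemma G_mul_apply (s : Finset (Fin N)) (d : Fin N → ℝ) {m : ℕ}
    (M : Matrix (Fin N) (Fin m) ℝ) (x : Fin N) (j : Fin m) :
    ((∑ i ∈ s, d i • Matrix.vecMulVec (h i) (h i)) * M) x j
      = ∑ i ∈ s, (d i * (h i ⬝ᵥ fun t => M t j)) * h i x := by
  simp only [Matrix.mul_apply, Matrix.sum_apply, Matrix.smul_apply, Matrix.vecMulVec_apply,
    smul_eq_mul, dotProduct, Finset.sum_mul, Finset.mul_sum]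
  rw [Finset.sum_comm]
  apply Finset.sum_congr rfl; intro i _
  apply Finset.sum_congr rfl; intro t _
  ring

lemma G_col_sq (hortho : ∀ i j, h i ⬝ᵥ h j = if i = j then 1 else 0)
    (s : Finset (Fin N)) (d : Fin N → ℝ) {m : ℕ}
    (M : Matrix (Fin N) (Fin m) ℝ) (j : Fin m) :
    ∑ x, ((∑ i ∈ s, d i • Matrix.vecMulVec (h i) (h i)) * M) x j ^ 2
      = ∑ i ∈ s, (d i * (h i ⬝ᵥ fun t => M t j)) ^ 2 := by
  simp_rw [G_mul_apply h s d M]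
  exact expand h hortho s _

end S15

namespace S15
variable {N : ℕ}
variable (h : Fin N → Fin N → ℝ)

/-- frob as sum over columns -/
lemma frob_eq_col {m : ℕ} (M : Matrix (Fin N) (Fin m) ℝ) :
    frob M = Real.sqrt (∑ j, ∑ x, M x j ^ 2) := by
  rw [frob, Finset.sum_comm]

lemma frob_G_mul_le (hortho : ∀ i j, h i ⬝ᵥ h j = if i = j then 1 else 0)
    (s : Finset (Fin N)) (d : Fin N → ℝ) {c : ℝ} (hc : 0 ≤ c)
    (hd : ∀ i ∈ s, |d i| ≤ c) {m : ℕ} (M : Matrix (Fin N) (Fin m) ℝ) :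
    frob ((∑ i ∈ s, d i • Matrix.vecMulVec (h i) (h i)) * M) ≤ c * frob M := by
  rw [frob_eq_col, frob_eq_col]
  apply sqrt_le_mul_sqrt hc
  rw [Finset.mul_sum]
  apply Finset.sum_le_sum
  intro j _
  rw [G_col_sq h hortho s d M j]
  calc ∑ i ∈ s, (d i * (h i ⬝ᵥ fun t => M t j)) ^ 2
      ≤ ∑ i ∈ s, c ^ 2 * (h i ⬝ᵥ fun t => M t j) ^ 2 := by
        apply Finset.sum_le_sum; intro i hi
        rw [mul_pow]
        apply mul_le_mul_of_nonneg_right _ (sq_nonneg _)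
        calc d i ^ 2 = |d i| ^ 2 := (sq_abs _).symm
          _ ≤ c ^ 2 := by
            apply pow_le_pow_left₀ (abs_nonneg _) (hd i hi)
    _ ≤ c ^ 2 * ∑ i, (h i ⬝ᵥ fun t => M t j) ^ 2 := by
        rw [← Finset.mul_sum]
        apply mul_le_mul_of_nonneg_left _ (sq_nonneg c)
        apply Finset.sum_le_sum_of_subset_of_nonneg (Finset.subset_univ s)
        intro i _ _; exact sq_nonneg _
    _ = c ^ 2 * ∑ x, M x j ^ 2 := by rw [parseval h hortho]

/-- G kills the Pcol correction when g = h i0 with i0 ∉ s. -/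
lemma G_mul_Pcol (hortho : ∀ i j, h i ⬝ᵥ h j = if i = j then 1 else 0)
    (s : Finset (Fin N)) (d : Fin N → ℝ) (i0 : Fin N) (hi0 : i0 ∉ s)
    {m : ℕ} (M : Matrix (Fin N) (Fin m) ℝ) :
    (∑ i ∈ s, d i • Matrix.vecMulVec (h i) (h i)) * Pcol (h i0) M
      = (∑ i ∈ s, d i • Matrix.vecMulVec (h i) (h i)) * M := by
  ext x j
  rw [G_mul_apply, G_mul_apply]
  apply Finset.sum_congr rfl
  intro i hi
  have hz : h i ⬝ᵥ h i0 = 0 := by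
    rw [hortho]
    simp only [ite_eq_right_iff]
    intro he; exact absurd (he ▸ hi) hi0
  have : (h i ⬝ᵥ fun t => Pcol (h i0) M t j) = h i ⬝ᵥ fun t => M t j := by
    simp only [Pcol, Matrix.of_apply, dotProduct, mul_sub, Finset.sum_sub_distrib]
    have e : ∀ t : Fin N, h i t * ((∑ x, M x j * h i0 x) * h i0 t)
        = (∑ x, M x j * h i0 x) * (h i t * h i0 t) := by intro t; ring
    simp_rw [e, ← Finset.mul_sum]
    have : ∑ t, h i t * h i0 t = 0 := by simpa [dotProduct] using hz
    rw [this, mul_zero, sub_zero]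
  rw [this]

end S15

namespace S15
variable {N : ℕ}

lemma Pcol_mul (g : Fin N → ℝ) {m p : ℕ} (X : Matrix (Fin N) (Fin m) ℝ)
    (W : Matrix (Fin m) (Fin p) ℝ) :
    Pcol g (X * W) = Pcol g X * W := by
  ext i j
  simp only [Pcol, Matrix.of_apply, Matrix.mul_apply, dotProduct, Finset.sum_mul,
    sub_mul, Finset.sum_sub_distrib]
  congr 1
  rw [Finset.sum_comm]
  apply Finset.sum_congr rfl; intro k _
  apply Finset.sum_congr rfl; intro x _
  ring

/-- decomposition of a symmetric matrix with eigenbasis h -/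
lemma H_apply (h : Fin N → Fin N → ℝ)
    (hortho : ∀ i j, h i ⬝ᵥ h j = if i = j then 1 else 0)
    (H : Matrix (Fin N) (Fin N) ℝ)
    (μ : Fin N → ℝ) (heig : ∀ i, H *ᵥ h i = μ i • h i) (i j : Fin N) :
    H i j = ∑ k, (μ k * h k i) * h k j := by
  have hc := complete h hortho (fun t => H i t) j
  rw [← hc]
  apply Finset.sum_congr rfl; intro k _
  congr 1
  have : (h k ⬝ᵥ fun t => H i t) = (H *ᵥ h k) i := by
    simp [dotProduct, Matrix.mulVec, mul_comm]
  rw [this, heig k]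
  simp [mul_comm]

lemma Pcol_H_mul (h : Fin N → Fin N → ℝ)
    (hortho : ∀ i j, h i ⬝ᵥ h j = if i = j then 1 else 0)
    (H : Matrix (Fin N) (Fin N) ℝ)
    (μ : Fin N → ℝ) (heig : ∀ i, H *ᵥ h i = μ i • h i) (i0 : Fin N)
    {m : ℕ} (M : Matrix (Fin N) (Fin m) ℝ) :
    Pcol (h i0) (H * M)
      = (∑ i ∈ Finset.univ.erase i0, μ i • Matrix.vecMulVec (h i) (h i)) * M := by
  ext x j
  rw [G_mul_apply]
  have hHM : ∀ t : Fin N, (H * M) t j = ∑ k, (μ k * (h k ⬝ᵥ fun t => M t j)) * h k t := by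
    intro t
    rw [Matrix.mul_apply]
    have : ∀ t', H t t' * M t' j = ∑ k, (μ k * h k t) * (h k t' * M t' j) := by
      intro t'
      rw [H_apply h hortho H μ heig t t', Finset.sum_mul]
      apply Finset.sum_congr rfl; intro k _; ring
    simp_rw [this]
    rw [Finset.sum_comm]
    apply Finset.sum_congr rfl; intro k _
    simp only [dotProduct, Finset.mul_sum, Finset.sum_mul]
    apply Finset.sum_congr rfl; intro t' _
    ring
  have hdot : ((fun t => (H * M) t j) ⬝ᵥ h i0) = μ i0 * (h i0 ⬝ᵥ fun t => M t j) := by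
    simp only [dotProduct]
    simp_rw [hHM, Finset.sum_mul]
    rw [Finset.sum_comm]
    have e : ∀ k : Fin N, ∑ t, (μ k * (h k ⬝ᵥ fun t => M t j)) * h k t * h i0 t
        = (μ k * (h k ⬝ᵥ fun t => M t j)) * (h k ⬝ᵥ h i0) := by
      intro k
      have e2 : ∀ t : Fin N, (μ k * (h k ⬝ᵥ fun t => M t j)) * h k t * h i0 t
          = (μ k * (h k ⬝ᵥ fun t => M t j)) * (h k t * h i0 t) := fun t => by ring
      simp_rw [e2, ← Finset.mul_sum]; rfl
    simp_rw [e, hortho]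
    simp [dotProduct]
  simp only [Pcol, Matrix.of_apply, hdot, hHM x]
  rw [← Finset.sum_erase_add Finset.univ _ (Finset.mem_univ i0)]
  ring

end S15

namespace S15
variable {N : ℕ}

lemma pv_sq (g : Fin N → ℝ) (hg : g ⬝ᵥ g = 1) (y : Fin N → ℝ) :
    ∑ x, (y x - (y ⬝ᵥ g) * g x) ^ 2 = y ⬝ᵥ y - (y ⬝ᵥ g) ^ 2 := by
  have e : ∀ x : Fin N, (y x - (y ⬝ᵥ g) * g x) ^ 2
      = y x * y x - 2 * (y ⬝ᵥ g) * (y x * g x) + (y ⬝ᵥ g) ^ 2 * (g x * g x) := by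
    intro x; ring
  simp_rw [e, Finset.sum_add_distrib, Finset.sum_sub_distrib, ← Finset.mul_sum]
  have h1 : ∑ x, y x * g x = y ⬝ᵥ g := rfl
  have h2 : ∑ x, g x * g x = 1 := hg
  have h3 : ∑ x, y x * y x = y ⬝ᵥ y := rfl
  rw [h1, h2, h3]
  ring

/-- key ReLU lemma (Oono–Suzuki): projection norm does not increase under ReLU,
when `g` is a nonnegative unit vector. -/
lemma relu_pv (g : Fin N → ℝ) (hg : g ⬝ᵥ g = 1) (hgpos : ∀ x, 0 ≤ g x)
    (f : Fin N → ℝ) :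
    ∑ x, ((fun t => max (f t) 0) x - ((fun t => max (f t) 0) ⬝ᵥ g) * g x) ^ 2
      ≤ ∑ x, (f x - (f ⬝ᵥ g) * g x) ^ 2 := by
  set a : Fin N → ℝ := fun t => max (f t) 0 with ha
  set b : Fin N → ℝ := fun t => max (-f t) 0 with hb
  rw [pv_sq g hg, pv_sq g hg]
  have hfa : f ⬝ᵥ g = a ⬝ᵥ g - b ⬝ᵥ g := by
    simp only [dotProduct, ha, hb, ← Finset.sum_sub_distrib]
    apply Finset.sum_congr rfl; intro x _
    rcases le_total (f x) 0 with hx | hx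
    · rw [max_eq_right hx, max_eq_left (by linarith)]; ring
    · rw [max_eq_left hx, max_eq_right (by linarith)]; ring
  have hff : f ⬝ᵥ f = a ⬝ᵥ a + b ⬝ᵥ b := by
    simp only [dotProduct, ha, hb, ← Finset.sum_add_distrib]
    apply Finset.sum_congr rfl; intro x _
    rcases le_total (f x) 0 with hx | hx
    · rw [max_eq_right hx, max_eq_left (by linarith)]; ring
    · rw [max_eq_left hx, max_eq_right (by linarith)]; ring
  have hA : 0 ≤ a ⬝ᵥ g := Finset.sum_nonneg fun x _ =>
    mul_nonneg (le_max_right _ _) (hgpos x)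
  have hB : 0 ≤ b ⬝ᵥ g := Finset.sum_nonneg fun x _ =>
    mul_nonneg (le_max_right _ _) (hgpos x)
  have hCS : (b ⬝ᵥ g) ^ 2 ≤ b ⬝ᵥ b := by
    have := Finset.sum_mul_sq_le_sq_mul_sq Finset.univ b g
    have hbb : ∑ x, b x ^ 2 = b ⬝ᵥ b := by simp [dotProduct, sq]
    have hgg : ∑ x, g x ^ 2 = (1 : ℝ) := by
      rw [← hg]; simp [dotProduct, sq]
    calc (b ⬝ᵥ g) ^ 2 = (∑ x, b x * g x) ^ 2 := rfl
      _ ≤ (∑ x, b x ^ 2) * ∑ x, g x ^ 2 := this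
      _ = b ⬝ᵥ b := by rw [hbb, hgg, mul_one]
  rw [hfa, hff]
  nlinarith [mul_nonneg hA hB]

/-- `frob (A * B) ≤ frob A * frob B` -/
lemma frob_mul_le {n m p : ℕ} (A : Matrix (Fin n) (Fin m) ℝ)
    (B : Matrix (Fin m) (Fin p) ℝ) : frob (A * B) ≤ frob A * frob B := by
  rw [frob, frob, frob, ← Real.sqrt_mul (by positivity)]
  apply Real.sqrt_le_sqrt
  calc ∑ i, ∑ j, (A * B) i j ^ 2
      ≤ ∑ i, ∑ j, (∑ k, A i k ^ 2) * (∑ k, B k j ^ 2) := by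
        apply Finset.sum_le_sum; intro i _
        apply Finset.sum_le_sum; intro j _
        rw [Matrix.mul_apply]
        exact Finset.sum_mul_sq_le_sq_mul_sq Finset.univ _ _
    _ = (∑ i, ∑ k, A i k ^ 2) * (∑ j, ∑ k, B k j ^ 2) := by
        rw [Finset.sum_mul]
        apply Finset.sum_congr rfl; intro i _
        rw [← Finset.mul_sum]
    _ = (∑ i, ∑ k, A i k ^ 2) * (∑ k, ∑ j, B k j ^ 2) := by rw [Finset.sum_comm (γ := Fin p)]
  
lemma frob_Pcol_relu_le (g : Fin N → ℝ) (hg : g ⬝ᵥ g = 1) (hgpos : ∀ x, 0 ≤ g x)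
    {m : ℕ} (M : Matrix (Fin N) (Fin m) ℝ)
    (reluM : Matrix (Fin N) (Fin m) ℝ)
    (hrelu : ∀ i j, reluM i j = max (M i j) 0) :
    frob (Pcol g reluM) ≤ frob (Pcol g M) := by
  rw [frob_eq_col, frob_eq_col]
  apply Real.sqrt_le_sqrt
  apply Finset.sum_le_sum
  intro j _
  have := relu_pv g hg hgpos (fun t => M t j)
  simp only [Pcol, Matrix.of_apply]
  calc ∑ x, (reluM x j - ((fun t => reluM t j) ⬝ᵥ g) * g x) ^ 2
      = ∑ x, ((fun t => max (M t j) 0) x - ((fun t => max (M t j) 0) ⬝ᵥ g) * g x) ^ 2 := by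
        apply Finset.sum_congr rfl; intro x _
        simp [hrelu]
    _ ≤ ∑ x, (M x j - ((fun t => M t j) ⬝ᵥ g) * g x) ^ 2 := this

lemma frob_Pcol_le (g : Fin N → ℝ) (hg : g ⬝ᵥ g = 1)
    {m : ℕ} (M : Matrix (Fin N) (Fin m) ℝ) : frob (Pcol g M) ≤ frob M := by
  rw [frob_eq_col, frob_eq_col]
  apply Real.sqrt_le_sqrt
  apply Finset.sum_le_sum
  intro j _
  simp only [Pcol, Matrix.of_apply]
  rw [pv_sq g hg (fun t => M t j)]
  have : ((fun t => M t j) ⬝ᵥ fun t => M t j) = ∑ x, M x j ^ 2 := by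
    simp [dotProduct, sq]
  rw [this]
  have := sq_nonneg ((fun t => M t j) ⬝ᵥ g)
  linarith

end S15

open S15 in
/-- for every integer `r ≥ 1`, with `H̃^{r/2} = Σ_{i=2}^N |μ_i|^{r/2} h_i h_iᵀ`,
the GCN iterates satisfy `‖H̃^{r/2} F^(K)‖_F ≤ μ_high^{K + r/2} ‖F^(0)‖_F`. -/
theorem stmt15 (N K : ℕ) (hN : 2 ≤ N) (hK : 1 ≤ K)
    (H : Matrix (Fin N) (Fin N) ℝ) (hH : H.IsSymm)
    (h : Fin N → Fin N → ℝ)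
    (hortho : ∀ i j, h i ⬝ᵥ h j = if i = j then 1 else 0)
    (μ : Fin N → ℝ) (heig : ∀ i, H *ᵥ h i = μ i • h i)
    (h1pos : ∀ x, 0 ≤ h ⟨0, by omega⟩ x)
    (m : ℕ → ℕ) (W : ∀ k, Matrix (Fin (m k)) (Fin (m (k + 1))) ℝ)
    (hW : ∀ k, k < K → frob (W k) ≤ 1)
    (F : ∀ k, Matrix (Fin N) (Fin (m k)) ℝ)
    (hF : ∀ k, k < K → F (k + 1) = reluM (H * F k * W k))
    (r : ℕ) (hr : 1 ≤ r) :
    frob (HtildePow h μ r * F K) ≤ muHigh μ ^ ((K : ℝ) + (r : ℝ) / 2) * frob (F 0) := by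
  have hi0N : 0 < N := by omega
  set i0 : Fin N := ⟨0, hi0N⟩ with hi0def
  set g : Fin N → ℝ := h i0 with hgdef
  have hg1 : g ⬝ᵥ g = 1 := by rw [hgdef]; simpa using hortho i0 i0
  have hgpos : ∀ x, 0 ≤ g x := h1pos
  set s0 : Finset (Fin N) := Finset.univ.filter (fun i : Fin N => 0 < (i : ℕ)) with hs0
  have hi0s : i0 ∉ s0 := by simp [hs0, hi0def]
  have hs0erase : s0 = Finset.univ.erase i0 := by
    ext k
    simp only [hs0, Finset.mem_filter, Finset.mem_univ, true_and, Finset.mem_erase, and_true,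
      hi0def, ne_eq, Fin.ext_iff]
    show 0 < (k : ℕ) ↔ ¬((k : ℕ) = 0)
    omega
  set μh := muHigh μ with hμh
  have hbd : ∀ i ∈ s0, |μ i| ≤ μh := by
    intro i hi
    have hi' : 0 < (i : ℕ) := by simpa [hs0] using hi
    exact le_ciSup (Set.Finite.bddAbove
      (Set.finite_range (fun i : {i : Fin N // 0 < (i : ℕ)} => |μ i.1|)))
      (⟨i, hi'⟩ : {i : Fin N // 0 < (i : ℕ)})
  have h1s : (⟨1, by omega⟩ : Fin N) ∈ s0 := by simp [hs0]
  have hμh0 : 0 ≤ μh := le_trans (abs_nonneg _) (hbd ⟨1, by omega⟩ h1s)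
  have key : ∀ k, k ≤ K → frob (Pcol g (F k)) ≤ μh ^ k * frob (F 0) := by
    intro k
    induction k with
    | zero => intro _; simpa using frob_Pcol_le g hg1 (F 0)
    | succ k ih =>
      intro hk1
      have hkK : k < K := hk1
      have ihk := ih (le_of_lt hkK)
      rw [hF k hkK]
      calc frob (Pcol g (reluM (H * F k * W k)))
          ≤ frob (Pcol g (H * F k * W k)) :=
            frob_Pcol_relu_le g hg1 hgpos _ _ (fun i j => rfl)
        _ = frob (Pcol g (H * F k) * W k) := by rw [Pcol_mul]
        _ ≤ frob (Pcol g (H * F k)) * frob (W k) := frob_mul_le _ _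
        _ ≤ frob (Pcol g (H * F k)) * 1 :=
            mul_le_mul_of_nonneg_left (hW k hkK) (frob_nonneg _)
        _ = frob (Pcol g (H * F k)) := mul_one _
        _ = frob ((∑ i ∈ s0, μ i • Matrix.vecMulVec (h i) (h i)) * F k) := by
            rw [hgdef, Pcol_H_mul h hortho H μ heig i0, hs0erase]
        _ = frob ((∑ i ∈ s0, μ i • Matrix.vecMulVec (h i) (h i)) * Pcol g (F k)) := by
            rw [hgdef, G_mul_Pcol h hortho s0 μ i0 hi0s]
        _ ≤ μh * frob (Pcol g (F k)) := frob_G_mul_le h hortho s0 μ hμh0 hbd _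
        _ ≤ μh * (μh ^ k * frob (F 0)) := mul_le_mul_of_nonneg_left ihk hμh0
        _ = μh ^ (k + 1) * frob (F 0) := by ring
  have hKfin := key K le_rfl
  set c : ℝ := μh ^ ((r : ℝ) / 2) with hc
  have hc0 : 0 ≤ c := Real.rpow_nonneg hμh0 _
  have hdb : ∀ i ∈ s0, |(|μ i| ^ ((r : ℝ) / 2))| ≤ c := by
    intro i hi
    rw [abs_of_nonneg (Real.rpow_nonneg (abs_nonneg _) _)]
    exact Real.rpow_le_rpow (abs_nonneg _) (hbd i hi) (by positivity)
  have hHt : HtildePow h μ r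
      = ∑ i ∈ s0, (|μ i| ^ ((r : ℝ) / 2)) • Matrix.vecMulVec (h i) (h i) := rfl
  have hr' : (0 : ℝ) < (r : ℝ) := by exact_mod_cast hr
  have hne0 : (K : ℝ) + (r : ℝ) / 2 ≠ 0 := by
    have : (0 : ℝ) ≤ (K : ℝ) := Nat.cast_nonneg K
    intro hcon; nlinarith
  calc frob (HtildePow h μ r * F K)
      = frob ((∑ i ∈ s0, (|μ i| ^ ((r : ℝ) / 2)) • Matrix.vecMulVec (h i) (h i))
          * Pcol g (F K)) := by
        rw [hHt, hgdef, G_mul_Pcol h hortho s0 _ i0 hi0s]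
    _ ≤ c * frob (Pcol g (F K)) := frob_G_mul_le h hortho s0 _ hc0 hdb _
    _ ≤ c * (μh ^ K * frob (F 0)) := mul_le_mul_of_nonneg_left hKfin hc0
    _ = μh ^ ((K : ℝ) + (r : ℝ) / 2) * frob (F 0) := by
        rw [Real.rpow_add' hμh0 hne0, Real.rpow_natCast]
        ring
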